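/- arXiv:2404.00154 — 2 statements merged into one kernel-verified Lean document; each statement's English description precedes it below -/
import Mathlib

section
/- With $\hat{X}$, $H$, $\Gamma$, and $T = [I + (H\hat{X})^T \Gamma^{-1}(H\hat{X})]^{-1}$ as in the ETKF, and $X = \hat{X} T^{1/2}$ where $T^{1/2}$ is the symmetric positive-definite square root of $T$, the transformed perturbation matrix satisfies $X X^T = \hat{X} T \hat{X}^T = (I - KH)\hat{C}$, where $\hat{C} = \hat{X}\hat{X}^T$ and $K = \hat{C}H^T(H\hat{C}H^T + \Gamma)^{-1}$. -/
/-!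
The symmetric square root of `T` squares to `T`, so `X Xᵀ = X̂ T X̂ᵀ`. For the second identity
put `S = H X̂` and `A = T⁻¹ = 1 + Sᵀ Γ⁻¹ S`. Then `H X̂ A = (H Ĉ Hᵀ + Γ) Γ⁻¹ S`, which makes
`(1 - K H) X̂ A = X̂`; multiplying by `A⁻¹ X̂ᵀ` on the right gives `X̂ T X̂ᵀ = (1 - K H) Ĉ`.
`A` is invertible by Sylvester's identity `det (1 + Sᵀ Γ⁻¹ S) = det (S Sᵀ + Γ) · det Γ⁻¹`.
-/

open Matrix

section
open scoped ComplexOrder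

/-- The positive semidefinite square root, as defined in Mathlib (December 2024), since removed. -/
noncomputable def Matrix.PosSemidef.sqrt {n : Type*} [Fintype n] [DecidableEq n] {𝕜 : Type*}
    [RCLike 𝕜] {A : Matrix n n 𝕜} (hA : A.PosSemidef) : Matrix n n 𝕜 :=
  hA.1.eigenvectorUnitary.1 * diagonal ((↑) ∘ (√·) ∘ hA.1.eigenvalues) *
  (star hA.1.eigenvectorUnitary : Matrix n n 𝕜)

end

namespace Matrix.PosSemidef

open scoped ComplexOrder

variable {n 𝕜 : Type*} [Fintype n] [DecidableEq n] [RCLike 𝕜] {A : Matrix n n 𝕜}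

theorem conjTranspose_sqrt (hA : A.PosSemidef) : hA.sqrtᴴ = hA.sqrt := by
  simp only [sqrt, conjTranspose_mul, diagonal_conjTranspose, conjTranspose_conjTranspose,
    Matrix.mul_assoc, star_eq_conjTranspose]
  congr 3
  funext i
  simp

theorem sqrt_mul_self (hA : A.PosSemidef) : hA.sqrt * hA.sqrt = A := by
  conv_rhs => rw [hA.1.spectral_theorem, Unitary.conjStarAlgAut_apply]
  simp only [sqrt, Matrix.mul_assoc]
  rw [← Matrix.mul_assoc (star _ : Matrix n n 𝕜), Unitary.coe_star_mul_self, Matrix.one_mul,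
    ← Matrix.mul_assoc (diagonal _), diagonal_mul_diagonal]
  congr 3
  funext i
  simp [← RCLike.ofReal_mul, Real.mul_self_sqrt (hA.eigenvalues_nonneg i)]

theorem mul_sqrt_mul_conjTranspose {m : Type*} (hA : A.PosSemidef) (Y : Matrix m n 𝕜) :
    Y * hA.sqrt * (Y * hA.sqrt)ᴴ = Y * A * Yᴴ := by
  rw [conjTranspose_mul, conjTranspose_sqrt, Matrix.mul_assoc, ← Matrix.mul_assoc hA.sqrt,
    sqrt_mul_self, Matrix.mul_assoc]

end Matrix.PosSemidef

namespace Matrix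

variable {m n k R : Type*} [Fintype m] [Fintype n] [Fintype k] [DecidableEq m] [DecidableEq k]
  [CommRing R]

noncomputable def kalmanGain (C : Matrix n n R) (H : Matrix m n R) (Γ : Matrix m m R) :
    Matrix n m R :=
  C * Hᵀ * (H * C * Hᵀ + Γ)⁻¹

variable (X : Matrix n k R) (H : Matrix m n R) {Γ : Matrix m m R}

theorem isUnit_det_one_add_transpose_mul_inv_mul (hΓ : IsUnit Γ.det)
    (hG : IsUnit (H * (X * Xᵀ) * Hᵀ + Γ).det) :
    IsUnit (1 + (H * X)ᵀ * Γ⁻¹ * (H * X)).det := by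
  have hfactor : 1 + H * X * ((H * X)ᵀ * Γ⁻¹) = (H * (X * Xᵀ) * Hᵀ + Γ) * Γ⁻¹ := by
    rw [add_mul, mul_nonsing_inv _ hΓ, add_comm, transpose_mul]
    simp only [Matrix.mul_assoc]
  rw [det_one_add_mul_comm, hfactor, det_mul]
  exact hG.mul (isUnit_nonsing_inv_det Γ hΓ)

variable [DecidableEq n]

theorem one_sub_kalmanGain_mul_mul_mul_one_add (hΓ : IsUnit Γ.det)
    (hG : IsUnit (H * (X * Xᵀ) * Hᵀ + Γ).det) :
    (1 - kalmanGain (X * Xᵀ) H Γ * H) * (X * (1 + (H * X)ᵀ * Γ⁻¹ * (H * X))) = X := by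
  set G := H * (X * Xᵀ) * Hᵀ + Γ
  set A := 1 + (H * X)ᵀ * Γ⁻¹ * (H * X)
  have hXA : X * A = X + X * Xᵀ * Hᵀ * (Γ⁻¹ * (H * X)) := by
    simp only [A, Matrix.mul_add, Matrix.mul_one, transpose_mul, Matrix.mul_assoc]
  have hHXA : H * (X * A) = G * (Γ⁻¹ * (H * X)) := by
    rw [hXA, Matrix.mul_add, add_comm, Matrix.add_mul, mul_nonsing_inv_cancel_left _ _ hΓ]
    simp only [Matrix.mul_assoc]
  calc (1 - kalmanGain (X * Xᵀ) H Γ * H) * (X * A)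
      = X * A - X * Xᵀ * Hᵀ * (G⁻¹ * (H * (X * A))) := by
        rw [kalmanGain, Matrix.sub_mul, Matrix.one_mul]
        simp only [Matrix.mul_assoc, G]
    _ = X := by rw [hHXA, nonsing_inv_mul_cancel_left _ _ hG, hXA, add_sub_cancel_right]

theorem mul_inv_one_add_mul_transpose_eq_one_sub_kalmanGain_mul (hΓ : IsUnit Γ.det)
    (hG : IsUnit (H * (X * Xᵀ) * Hᵀ + Γ).det) :
    X * (1 + (H * X)ᵀ * Γ⁻¹ * (H * X))⁻¹ * Xᵀ = (1 - kalmanGain (X * Xᵀ) H Γ * H) * (X * Xᵀ) := by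
  set A := 1 + (H * X)ᵀ * Γ⁻¹ * (H * X)
  calc X * A⁻¹ * Xᵀ
      = (1 - kalmanGain (X * Xᵀ) H Γ * H) * (X * A) * A⁻¹ * Xᵀ := by
        rw [one_sub_kalmanGain_mul_mul_mul_one_add X H hΓ hG]
    _ = (1 - kalmanGain (X * Xᵀ) H Γ * H) * (X * Xᵀ) := by
        rw [← Matrix.mul_assoc _ X, mul_nonsing_inv_cancel_right _ _
          (isUnit_det_one_add_transpose_mul_inv_mul X H hΓ hG), Matrix.mul_assoc]

end Matrix

theorem etkf_consistency {M N K : ℕ}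
    (Xhat : Matrix (Fin N) (Fin K) ℝ)
    (H : Matrix (Fin M) (Fin N) ℝ)
    (Γ : Matrix (Fin M) (Fin M) ℝ) (hΓ : Γ.PosDef)
    (T : Matrix (Fin K) (Fin K) ℝ)
    (hT : T = (1 + (H * Xhat)ᵀ * Γ⁻¹ * (H * Xhat))⁻¹)
    (hTpsd : T.PosSemidef)
    (X : Matrix (Fin N) (Fin K) ℝ) (hX : X = Xhat * hTpsd.sqrt)
    (Chat : Matrix (Fin N) (Fin N) ℝ) (hC : Chat = Xhat * Xhatᵀ)
    (Kg : Matrix (Fin N) (Fin M) ℝ)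
    (hK : Kg = Chat * Hᵀ * (H * Chat * Hᵀ + Γ)⁻¹) :
    X * Xᵀ = Xhat * T * Xhatᵀ ∧ Xhat * T * Xhatᵀ = (1 - Kg * H) * Chat := by
  have hG : (H * (Xhat * Xhatᵀ) * Hᵀ + Γ).PosDef := by
    simpa only [conjTranspose_eq_transpose_of_trivial] using
      PosDef.posSemidef_add
        ((posSemidef_self_mul_conjTranspose Xhat).mul_mul_conjTranspose_same H) hΓ
  constructor
  · simpa only [hX, conjTranspose_eq_transpose_of_trivial] using
      hTpsd.mul_sqrt_mul_conjTranspose Xhat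
  · rw [hK, hC, hT]
    exact mul_inv_one_add_mul_transpose_eq_one_sub_kalmanGain_mul Xhat H
      ((isUnit_iff_isUnit_det _).mp hΓ.isUnit) ((isUnit_iff_isUnit_det _).mp hG.isUnit)
end

section
/- The Gaspari–Cohn fifth-order piecewise rational function $g: [0,\infty) \to \mathbb{R}$ with halfwidth $c > 0$, defined by $g(r) = -\frac{1}{4}(r/c)^5 + \frac{1}{2}(r/c)^4 + \frac{5}{8}(r/c)^3 - \frac{5}{3}(r/c)^2 + 1$ for $0 \leq r \leq c$, $g(r) = \frac{1}{12}(r/c)^5 - \frac{1}{2}(r/c)^4 + \frac{5}{8}(r/c)^3 + \frac{5}{3}(r/c)^2 - 5(r/c) + 4 - \frac{2}{3}(c/r)$ for $c < r \leq 2c$, and $g(r) = 0$ for $r > 2c$, satisfies: $g(0) = 1$, $g$ is continuous on $[0,\infty)$, $0 \leq g(r) \leq 1$ for all $r \geq 0$, and $g$ has compact support contained in $[0, 2c]$. -/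
lemma gc_poly1 (x : ℝ) (h0 : 0 ≤ x) (h1 : x ≤ 1) :
    0 ≤ -(1/4)*x^5 + (1/2)*x^4 + (5/8)*x^3 - (5/3)*x^2 + 1 ∧
      -(1/4)*x^5 + (1/2)*x^4 + (5/8)*x^3 - (5/3)*x^2 + 1 ≤ 1 := by
  constructor
  · nlinarith [sq_nonneg x, sq_nonneg (x-1), sq_nonneg (x*(x-1)), sq_nonneg (x^2*(x-1)),
      mul_nonneg h0 (sub_nonneg.mpr h1), sq_nonneg (x^2 - x),
      mul_nonneg (mul_nonneg h0 h0) (sub_nonneg.mpr h1)]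
  · nlinarith [sq_nonneg x, mul_nonneg h0 (sub_nonneg.mpr h1), sq_nonneg (x-1),
      mul_nonneg (mul_nonneg h0 h0) (sub_nonneg.mpr h1),
      mul_nonneg (mul_nonneg (mul_nonneg h0 h0) h0) (sub_nonneg.mpr h1)]

lemma gc_poly2 (x y : ℝ) (h1 : 1 ≤ x) (h2 : x ≤ 2) (hxy : x * y = 1) :
    0 ≤ (1/12)*x^5 - (1/2)*x^4 + (5/8)*x^3 + (5/3)*x^2 - 5*x + 4 - (2/3)*y ∧
      (1/12)*x^5 - (1/2)*x^4 + (5/8)*x^3 + (5/3)*x^2 - 5*x + 4 - (2/3)*y ≤ 1 := by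
  have hx0 : (0:ℝ) < x := lt_of_lt_of_le one_pos h1
  set E : ℝ := (1/12)*x^5 - (1/2)*x^4 + (5/8)*x^3 + (5/3)*x^2 - 5*x + 4 - (2/3)*y with hE
  have key : 12*x*E = (x-2)^4*(x^2+2*x-1/2) := by
    rw [hE]; linear_combination (-8 : ℝ) * hxy
  have hq : (0:ℝ) ≤ x^2+2*x-1/2 := by nlinarith
  have h4 : (0:ℝ) ≤ (x-2)^4*(x^2+2*x-1/2) := by positivity
  have h12 : (0:ℝ) < 12*x := by linarith
  constructor
  · have hm : 12*x*0 ≤ 12*x*E := by rw [mul_zero, key]; exact h4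
    exact le_of_mul_le_mul_left hm h12
  · have h5 : 12*x*(1-E) = 12*x - (x-2)^4*(x^2+2*x-1/2) := by linarith [key]
    have h6 : (0:ℝ) ≤ 12*x - (x-2)^4*(x^2+2*x-1/2) := by
      nlinarith [sq_nonneg (x-1), sq_nonneg (x-2), sq_nonneg ((x-1)*(x-2)),
        mul_nonneg (sub_nonneg.mpr h1) (sub_nonneg.mpr h2),
        mul_nonneg (mul_nonneg (sub_nonneg.mpr h1) (sub_nonneg.mpr h1)) (sub_nonneg.mpr h2),
        mul_nonneg (mul_nonneg (sub_nonneg.mpr h1) (sub_nonneg.mpr h2)) (sub_nonneg.mpr h2)]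
    have hm : 12*x*E ≤ 12*x*1 := by rw [mul_one, key]; linarith
    exact le_of_mul_le_mul_left hm h12

theorem gaspari_cohn_properties (c : ℝ) (hc : 0 < c) (g : ℝ → ℝ)
    (h1 : ∀ r, 0 ≤ r → r ≤ c →
      g r = -(1/4) * (r/c)^5 + (1/2) * (r/c)^4 + (5/8) * (r/c)^3 - (5/3) * (r/c)^2 + 1)
    (h2 : ∀ r, c < r → r ≤ 2*c →
      g r = (1/12) * (r/c)^5 - (1/2) * (r/c)^4 + (5/8) * (r/c)^3 + (5/3) * (r/c)^2
        - 5 * (r/c) + 4 - (2/3) * (c/r))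
    (h3 : ∀ r, 2*c < r → g r = 0) :
    g 0 = 1 ∧ ContinuousOn g (Set.Ici 0) ∧
      (∀ r, 0 ≤ r → 0 ≤ g r ∧ g r ≤ 1) ∧
      (∀ r, 0 ≤ r → g r ≠ 0 → r ∈ Set.Icc 0 (2*c)) := by
  have hcne : c ≠ 0 := ne_of_gt hc
  refine ⟨?_, ?_, ?_, ?_⟩
  · rw [h1 0 le_rfl hc.le]
    simp
  · -- continuity
    set P : ℝ → ℝ := fun r => -(1/4) * (r/c)^5 + (1/2) * (r/c)^4 + (5/8) * (r/c)^3
        - (5/3) * (r/c)^2 + 1 with hP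
    set Q : ℝ → ℝ := fun r => (1/12) * (r/c)^5 - (1/2) * (r/c)^4 + (5/8) * (r/c)^3
        + (5/3) * (r/c)^2 - 5 * (r/c) + 4 - (2/3) * (c / max r c) with hQ
    have hPc : Continuous P := by fun_prop
    have hQc : Continuous Q := by
      apply Continuous.sub
      · fun_prop
      · apply Continuous.mul continuous_const
        apply Continuous.div continuous_const (continuous_id.max continuous_const)
        intro x
        have : c ≤ max x c := le_max_right _ _
        positivity
    have hInner : Continuous (fun r => if r ≤ 2*c then Q r else 0) := by
      apply Continuous.if_le hQc continuous_const continuous_id continuous_const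
      intro x hx
      subst hx
      have hmax : max (2*c) c = 2*c := max_eq_left (by linarith)
      have hd : (2*c)/c = 2 := by rw [div_eq_iff hcne]
      have hd2 : c/(2*c) = 1/2 := by
        rw [div_eq_iff (by positivity : (2:ℝ)*c ≠ 0)]; ring
      simp only [hQ, hmax, hd, hd2]
      norm_num
    have hGc : Continuous (fun r => if r ≤ c then P r else if r ≤ 2*c then Q r else 0) := by
      apply Continuous.if_le hPc hInner continuous_id continuous_const
      intro x hx
      simp only [id] at hx
      rw [hx, if_pos (by linarith : c ≤ 2*c)]
      have hmax : max c c = c := max_self c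
      have hd : c/c = 1 := div_self hcne
      simp only [hP, hQ, hmax, hd]
      norm_num
    apply hGc.continuousOn.congr
    intro r hr
    simp only
    by_cases hrc : r ≤ c
    · rw [if_pos hrc, h1 r hr hrc]
    · push_neg at hrc
      rw [if_neg (not_le.mpr hrc)]
      by_cases hr2 : r ≤ 2*c
      · rw [if_pos hr2, h2 r hrc hr2]
        have hmax : max r c = r := max_eq_left hrc.le
        simp only [hQ, hmax]
      · push_neg at hr2
        rw [if_neg (not_le.mpr hr2), h3 r hr2]
  · -- bounds
    intro r hr
    by_cases hrc : r ≤ c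
    · rw [h1 r hr hrc]
      exact gc_poly1 (r/c) (by positivity) ((div_le_one hc).mpr hrc)
    · push_neg at hrc
      by_cases hr2 : r ≤ 2*c
      · rw [h2 r hrc hr2]
        have hx1 : 1 ≤ r/c := (one_le_div hc).mpr hrc.le
        have hx2 : r/c ≤ 2 := by rw [div_le_iff₀ hc]; linarith
        have hrne : r ≠ 0 := ne_of_gt (lt_trans hc hrc)
        have hxy : (r/c) * (c/r) = 1 := by
          field_simp
        exact gc_poly2 (r/c) (c/r) hx1 hx2 hxy
      · push_neg at hr2
        rw [h3 r hr2]
        norm_num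
  · -- support
    intro r hr hne
    refine ⟨hr, ?_⟩
    by_contra h
    push_neg at h
    exact hne (h3 r h)
end
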